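/- arXiv:2509.00788 — 3 statements merged into one kernel-verified Lean document; each statement's English description precedes it below -/
import Mathlib

section
/- Let C₁, C₂, b, λ be complex numbers with C₁ ≠ 0, λ ≠ 0, b ≠ 0. Then the entire function g(ζ) = (C₁/λ) e^{λζ} + bζ + C₂ has infinitely many zeros. -/
open Complex Metric Set Filter

/-- `‖log z‖ ≤ |log ‖z‖| + π`. -/
lemma aux_norm_log_le (z : ℂ) : ‖Complex.log z‖ ≤ |Real.log ‖z‖| + Real.pi := by
  calc ‖Complex.log z‖ ≤ |(Complex.log z).re| + |(Complex.log z).im| :=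
        Complex.norm_le_abs_re_add_abs_im _
    _ ≤ |Real.log ‖z‖| + Real.pi := by
        rw [Complex.log_re, Complex.log_im]
        exact add_le_add_right (Complex.abs_arg_le_pi z) _

/-- `u ↦ log (1+u)` is 2-Lipschitz on the closed ball of radius 1/2. -/
lemma aux_log_lip {x y : ℂ} (hx : ‖x‖ ≤ 1/2) (hy : ‖y‖ ≤ 1/2) :
    ‖Complex.log (1 + x) - Complex.log (1 + y)‖ ≤ 2 * ‖x - y‖ := by
  have hderiv : ∀ u ∈ Metric.closedBall (0:ℂ) (1/2),
      HasDerivWithinAt (fun u : ℂ => Complex.log (1 + u)) ((1+u)⁻¹)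
        (Metric.closedBall (0:ℂ) (1/2)) u := by
    intro u hu
    have hu' : ‖u‖ ≤ 1/2 := by simpa using hu
    have hre : |u.re| ≤ ‖u‖ := Complex.abs_re_le_norm u
    have hmem : (1 : ℂ) + u ∈ Complex.slitPlane := by
      rw [Complex.mem_slitPlane_iff]
      left
      have := abs_le.mp hre
      simp only [Complex.add_re, Complex.one_re]
      linarith
    have h1 : HasDerivAt (fun u : ℂ => 1 + u) 1 u := (hasDerivAt_id u).const_add 1
    have h2 := (Complex.hasDerivAt_log hmem).comp u h1
    have h3 := h2.hasDerivWithinAt (s := Metric.closedBall (0:ℂ) (1/2))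
    rw [mul_one] at h3
    exact h3
  have hbound : ∀ u ∈ Metric.closedBall (0:ℂ) (1/2), ‖(1+u)⁻¹‖ ≤ 2 := by
    intro u hu
    have hu' : ‖u‖ ≤ 1/2 := by simpa using hu
    have h1 : (1:ℝ) ≤ ‖1 + u‖ + ‖u‖ := by
      have := norm_add_le (1 + u) (-u)
      simpa using this
    have h2 : (1:ℝ)/2 ≤ ‖1 + u‖ := by linarith
    rw [norm_inv]
    rw [inv_le_comm₀ (by linarith) (by norm_num)]
    linarith
  have := (convex_closedBall (0:ℂ) (1/2)).norm_image_sub_le_of_norm_hasDerivWithin_le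
    hderiv hbound (by simpa using hy) (by simpa using hx)
  simpa using this

/-- For any `A ≠ 0`, `B`, the equation `e^w = A w + B` has solutions of arbitrarily
large norm. -/
lemma aux_exists_large_solution (A B : ℂ) (hA : A ≠ 0) (R : ℝ) :
    ∃ w : ℂ, Complex.exp w = A * w + B ∧ R < ‖w‖ := by
  set a : ℝ := ‖A‖ with ha_def
  have ha : 0 < a := norm_pos_iff.mpr hA
  set bb : ℝ := ‖B‖ with hbb_def
  have hbb : 0 ≤ bb := norm_nonneg B
  set Cc : ℝ := 7*a + bb with hCc_def
  have hCc0 : 0 < Cc := by positivity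
  have hπ3 : 3 < Real.pi := Real.pi_gt_three
  have hπ4 : Real.pi < 3.15 := Real.pi_lt_d2
  obtain ⟨k, hk⟩ := exists_nat_gt (max (max R 2)
    (max ((bb+1)/(4*a)) ((2*Real.sqrt Cc + Real.pi + 1)^2)))
  have hkR : R < (k:ℝ) := lt_of_le_of_lt (le_trans (le_max_left _ _) (le_max_left _ _)) hk
  have hk2 : (2:ℝ) ≤ k := le_of_lt (lt_of_le_of_lt (le_trans (le_max_right _ _) (le_max_left _ _)) hk)
  have hk1 : (1:ℝ) ≤ k := by linarith
  have hk0 : (0:ℝ) < k := by linarith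
  have hkb : bb + 1 ≤ 4*a*k := by
    have h := lt_of_le_of_lt (le_trans (le_max_left _ _) (le_max_right _ _)) hk
    rw [div_lt_iff₀ (by positivity)] at h
    nlinarith
  have hksq : (2*Real.sqrt Cc + Real.pi + 1)^2 < k :=
    lt_of_le_of_lt (le_trans (le_max_right _ _) (le_max_right _ _)) hk
  -- the center and base point
  set c : ℂ := ((2*Real.pi*k : ℝ) : ℂ) * Complex.I with hc_def
  have hc_norm : ‖c‖ = 2*Real.pi*k := by
    rw [hc_def, norm_mul, Complex.norm_I, mul_one, Complex.norm_real, Real.norm_eq_abs]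
    exact abs_of_nonneg (by positivity)
  set z₀ : ℂ := A * c + B with hz₀_def
  have hAc_norm : ‖A * c‖ = a * (2*Real.pi*k) := by rw [norm_mul, hc_norm]
  have hz₀_lb : 2*Real.pi*a*k - bb ≤ ‖z₀‖ := by
    have h := norm_sub_le (A*c + B) B
    simp only [add_sub_cancel_right] at h
    rw [hAc_norm] at h
    have he : ‖A*c+B‖ = ‖z₀‖ := rfl
    linarith
  have hak : (0:ℝ) ≤ a * k := mul_nonneg ha.le hk0.le
  have hz₀_lb2 : 2*a*k + 1 ≤ ‖z₀‖ := by
    have h6 : 3*(a*(k:ℝ)) ≤ Real.pi*(a*(k:ℝ)) := mul_le_mul_of_nonneg_right hπ3.le hak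
    linarith
  have hz₀_pos : 0 < ‖z₀‖ := by linarith
  have hz₀_ne : z₀ ≠ 0 := by
    intro h; rw [h] at hz₀_pos; simp at hz₀_pos
  have hz₀_ub : ‖z₀‖ ≤ Cc * k := by
    have h := norm_add_le (A*c) B
    rw [hAc_norm] at h
    have h2 : ‖z₀‖ ≤ a * (2*Real.pi*k) + bb := h
    have h7 : Real.pi*(a*(k:ℝ)) ≤ 3.15*(a*(k:ℝ)) := mul_le_mul_of_nonneg_right hπ4.le hak
    have h8 : (0:ℝ) ≤ bb * ((k:ℝ) - 1) := mul_nonneg hbb (by linarith)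
    have : Cc * (k:ℝ) = 7*(a*(k:ℝ)) + bb*(k:ℝ) := by rw [hCc_def]; ring
    linarith
  -- the key logarithmic inequality
  have hlog : Real.log (Cc*k) + Real.pi + 1 ≤ k := by
    have hCk1 : (1:ℝ) ≤ Cc*k := by
      have he : Cc * (k:ℝ) = 7*(a*(k:ℝ)) + bb*(k:ℝ) := by rw [hCc_def]; ring
      have hb0 : (0:ℝ) ≤ bb*(k:ℝ) := mul_nonneg hbb hk0.le
      linarith
    have hCkpos : (0:ℝ) < Cc*k := by linarith
    have hs1 : Real.log (Real.sqrt (Cc*k)) ≤ Real.sqrt (Cc*k) - 1 :=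
      Real.log_le_sub_one_of_pos (Real.sqrt_pos.mpr hCkpos)
    have hs2 : Real.log (Real.sqrt (Cc*k)) = Real.log (Cc*k) / 2 :=
      Real.log_sqrt (le_of_lt hCkpos)
    have hs3 : Real.sqrt (Cc*k) = Real.sqrt Cc * Real.sqrt k :=
      Real.sqrt_mul (le_of_lt hCc0) _
    have hs4 : (1:ℝ) ≤ Real.sqrt k := by
      rw [show (1:ℝ) = Real.sqrt 1 from (Real.sqrt_one).symm]
      exact Real.sqrt_le_sqrt hk1
    have hs5 : 2*Real.sqrt Cc + Real.pi + 1 ≤ Real.sqrt k := by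
      have h := Real.sqrt_le_sqrt (le_of_lt hksq)
      rwa [Real.sqrt_sq (by positivity)] at h
    have hs6 : Real.sqrt k * Real.sqrt k = k := Real.mul_self_sqrt (le_of_lt hk0)
    rw [hs3] at hs1 hs2
    have h6 := mul_le_mul_of_nonneg_right hs5 (Real.sqrt_nonneg (k:ℝ))
    have h7 := mul_le_mul_of_nonneg_left hs4 (by linarith : (0:ℝ) ≤ Real.pi + 1)
    linarith
  -- the contraction map
  set s : Set ℂ := Metric.closedBall c (k:ℝ) with hs_def
  set F : ℂ → ℂ := fun w => c + Complex.log z₀ + Complex.log (1 + A * (w - c) / z₀) with hF_def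
  have key_u : ∀ w ∈ s, ‖A * (w - c) / z₀‖ ≤ 1/2 := by
    intro w hw
    have hd : ‖w - c‖ ≤ k := by
      rw [hs_def, Metric.mem_closedBall, dist_eq_norm] at hw; exact hw
    rw [norm_div, norm_mul, div_le_iff₀ hz₀_pos]
    have h1 : a * ‖w - c‖ ≤ a * k := mul_le_mul_of_nonneg_left hd (le_of_lt ha)
    linarith
  have hmaps : Set.MapsTo F s s := by
    intro w hw
    have hu := key_u w hw
    have hFsub : F w - c = Complex.log z₀ + Complex.log (1 + A * (w - c) / z₀) := by
      rw [hF_def]; ring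
    rw [hs_def, Metric.mem_closedBall, dist_eq_norm, hFsub]
    have h1 : ‖Complex.log z₀‖ ≤ |Real.log ‖z₀‖| + Real.pi := aux_norm_log_le z₀
    have habs : ‖z₀‖ = ‖z₀‖ := rfl
    have hz₀1 : (1:ℝ) ≤ ‖z₀‖ := by linarith
    have h2 : |Real.log ‖z₀‖| = Real.log ‖z₀‖ := by
      rw [habs, _root_.abs_of_nonneg (Real.log_nonneg hz₀1)]
    have h3 : Real.log ‖z₀‖ ≤ Real.log (Cc*k) :=
      Real.log_le_log (by linarith) hz₀_ub
    have h4 : ‖Complex.log (1 + A * (w - c) / z₀)‖ ≤ 3/2 * ‖A * (w - c) / z₀‖ :=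
      Complex.norm_log_one_add_half_le_self hu
    calc ‖Complex.log z₀ + Complex.log (1 + A * (w - c) / z₀)‖
        ≤ ‖Complex.log z₀‖ + ‖Complex.log (1 + A * (w - c) / z₀)‖ := norm_add_le _ _
      _ ≤ (Real.log (Cc*k) + Real.pi) + 3/2 * (1/2) := by
          rw [h2] at h1; linarith
      _ ≤ (k:ℝ) := by linarith
  have hexp : ∀ w ∈ s, Complex.exp (F w) = A * w + B := by
    intro w hw
    have hu := key_u w hw
    have h1u : (1 : ℂ) + A * (w - c) / z₀ ≠ 0 := by
      intro h
      have : A * (w - c) / z₀ = -1 := by linear_combination h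
      rw [this] at hu
      norm_num at hu
    have hc1 : Complex.exp c = 1 := by
      have hceq : c = (k:ℤ) * (2 * (Real.pi:ℂ) * Complex.I) := by
        rw [hc_def]; push_cast; ring
      rw [hceq, Complex.exp_int_mul_two_pi_mul_I]
    rw [hF_def]
    simp only
    rw [Complex.exp_add, Complex.exp_add, hc1, one_mul, Complex.exp_log hz₀_ne,
      Complex.exp_log h1u]
    rw [hz₀_def]
    have hz₀_ne' : A * c + B ≠ 0 := hz₀_ne
    field_simp
    ring
  have hlip : LipschitzOnWith (1/2 : NNReal) F s := by
    apply LipschitzOnWith.of_dist_le_mul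
    intro w₁ h₁ w₂ h₂
    have hu₁ := key_u w₁ h₁
    have hu₂ := key_u w₂ h₂
    have hFdiff : F w₁ - F w₂ =
        Complex.log (1 + A * (w₁ - c) / z₀) - Complex.log (1 + A * (w₂ - c) / z₀) := by
      rw [hF_def]; ring
    rw [dist_eq_norm, dist_eq_norm, hFdiff]
    have h := aux_log_lip hu₁ hu₂
    have hdiff : A * (w₁ - c) / z₀ - A * (w₂ - c) / z₀ = A * (w₁ - w₂) / z₀ := by ring
    rw [hdiff] at h
    have hnd : ‖A * (w₁ - w₂) / z₀‖ = a * ‖w₁ - w₂‖ / ‖z₀‖ := by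
      rw [norm_div, norm_mul]
    rw [hnd] at h
    have hz4a : 4*a ≤ ‖z₀‖ := by
      have : (0:ℝ) ≤ a*(2*(k:ℝ)-4) := mul_nonneg ha.le (by linarith)
      linarith
    have : 2 * (a * ‖w₁ - w₂‖ / ‖z₀‖) ≤ ((1/2 : NNReal) : ℝ) * ‖w₁ - w₂‖ := by
      push_cast
      rw [show 2 * (a * ‖w₁ - w₂‖ / ‖z₀‖) = (2 * a * ‖w₁ - w₂‖) / ‖z₀‖ from by ring,
        div_le_iff₀ hz₀_pos]
      have h8 := mul_le_mul_of_nonneg_left hz4a (norm_nonneg (w₁ - w₂))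
      linarith
    linarith
  have hsc : IsComplete s := Metric.isClosed_closedBall.isComplete
  have hcontr : ContractingWith (1/2 : NNReal) (hmaps.restrict F s s) :=
    ⟨by rw [← NNReal.coe_lt_coe]; norm_num, hlip.mapsToRestrict hmaps⟩
  obtain ⟨w, hws, hwfix, -⟩ := hcontr.exists_fixedPoint' hsc hmaps
    (Metric.mem_closedBall_self (by positivity)) (edist_ne_top _ _)
  refine ⟨w, ?_, ?_⟩
  · have h := hexp w hws
    rwa [hwfix] at h
  · have hd : ‖w - c‖ ≤ k := by
      rw [hs_def, Metric.mem_closedBall, dist_eq_norm] at hws; exact hws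
    have htri : ‖c‖ ≤ ‖w‖ + ‖w - c‖ := by
      have h := norm_add_le w (c - w)
      rw [show w + (c - w) = c from by ring] at h
      calc ‖c‖ ≤ ‖w‖ + ‖c - w‖ := h
        _ = ‖w‖ + ‖w - c‖ := by rw [norm_sub_rev]
    rw [hc_norm] at htri
    have h9 : (0:ℝ) ≤ (Real.pi - 3) * (k:ℝ) :=
      mul_nonneg (by linarith) hk0.le
    linarith

theorem infinitely_many_zeros (C₁ C₂ b lam : ℂ) (hC₁ : C₁ ≠ 0) (hlam : lam ≠ 0) (hb : b ≠ 0) :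
    {ζ : ℂ | C₁ / lam * Complex.exp (lam * ζ) + b * ζ + C₂ = 0}.Infinite := by
  set S := {ζ : ℂ | C₁ / lam * Complex.exp (lam * ζ) + b * ζ + C₂ = 0} with hS
  by_contra hfin
  rw [Set.not_infinite] at hfin
  have hbdd : BddAbove ((fun ζ => ‖ζ‖) '' S) := (hfin.image _).bddAbove
  obtain ⟨M, hM⟩ := hbdd
  set A : ℂ := -b / C₁ with hA_def
  set B : ℂ := -(lam * C₂) / C₁ with hB_def
  have hA : A ≠ 0 := by
    rw [hA_def]
    exact div_ne_zero (neg_ne_zero.mpr hb) hC₁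
  obtain ⟨w, hw, hwn⟩ := aux_exists_large_solution A B hA (‖lam‖ * (M + 1))
  have hlamn : (0:ℝ) < ‖lam‖ := norm_pos_iff.mpr hlam
  set ζ := w / lam with hζ_def
  have hζS : ζ ∈ S := by
    rw [hS, Set.mem_setOf_eq, hζ_def]
    have hlw : lam * (w / lam) = w := by field_simp
    rw [hlw, hw, hA_def, hB_def]
    field_simp
    ring
  have hζn : ‖ζ‖ ≤ M := hM (Set.mem_image_of_mem _ hζS)
  have : M + 1 < ‖ζ‖ := by
    rw [hζ_def, norm_div]
    rw [lt_div_iff₀ hlamn]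
    linarith [hwn]
  linarith
end

section
/- Let C₁, C₂, b, λ be complex numbers with C₁ ≠ 0, λ ≠ 0, b ≠ 0. Then the entire function g(ζ) = (C₁/λ) e^{λζ} + bζ + C₂ has unbounded spherical derivative on ℂ; in particular g is not a normal function. -/
set_option maxHeartbeats 1000000

open Complex Real

lemma aux_deriv (C₁ C₂ b lam : ℂ) (z : ℂ) :
    deriv (fun ζ : ℂ => C₁ / lam * Complex.exp (lam * ζ) + b * ζ + C₂) z
      = C₁ / lam * (Complex.exp (lam * z) * lam) + b := by
  have h1 : HasDerivAt (fun ζ : ℂ => Complex.exp (lam * ζ)) (Complex.exp (lam * z) * lam) z := by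
    simpa [Function.comp_def] using (Complex.hasDerivAt_exp (lam * z)).comp z ((hasDerivAt_id z).const_mul lam)
  have h2 : HasDerivAt (fun ζ : ℂ => C₁ / lam * Complex.exp (lam * ζ) + b * ζ + C₂)
      (C₁ / lam * (Complex.exp (lam * z) * lam) + b) z := by
    simpa using ((h1.const_mul (C₁ / lam)).add ((hasDerivAt_id z).const_mul b)).add_const C₂
  exact h2.deriv

lemma aux_log_abs (w : ℂ) :
    ‖Complex.log w‖ ≤ |Real.log (‖w‖)| + Real.pi := by
  unfold Complex.log
  refine (norm_add_le _ _).trans ?_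
  simp [Complex.norm_real]
  exact Complex.abs_arg_le_pi w

lemma aux_log_le (x : ℝ) (hx : 1 ≤ x) :
    Real.log x ≤ 4 * Real.sqrt (Real.sqrt x) := by
  have h0 : (0:ℝ) < x := by linarith
  have hs : Real.log x = 4 * Real.log (Real.sqrt (Real.sqrt x)) := by
    rw [Real.log_sqrt (Real.sqrt_nonneg x), Real.log_sqrt h0.le]; ring
  have := Real.log_le_sub_one_of_pos (x := Real.sqrt (Real.sqrt x)) (by positivity)
  rw [hs]; nlinarith [Real.sqrt_nonneg (Real.sqrt x)]

theorem unbounded_spherical_deriv (C₁ C₂ b lam : ℂ) (hC₁ : C₁ ≠ 0) (hlam : lam ≠ 0) (hb : b ≠ 0) :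
    ¬ ∃ M : ℝ, ∀ z : ℂ,
      ‖deriv (fun ζ : ℂ => C₁ / lam * Complex.exp (lam * ζ) + b * ζ + C₂) z‖ /
        (1 + ‖C₁ / lam * Complex.exp (lam * z) + b * z + C₂‖ ^ 2) ≤ M := by
  rintro ⟨M, hM⟩
  set β := ‖b‖ with hβ
  set K := ‖lam * C₂‖ with hK
  set c := ‖C₁‖ with hc
  have hβ0 : 0 < β := by simpa [hβ] using hb
  have hc0 : 0 < c := by simpa [hc] using hC₁
  have hπ : (0:ℝ) < Real.pi := Real.pi_pos
  set A : ℝ := (2 * Real.pi * β + K) / c with hA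
  have hA0 : 0 < A := by positivity
  set L : ℝ := 4 * Real.sqrt (Real.sqrt A) + Real.pi with hL
  have hL0 : 0 < L := by positivity
  set q : ℝ := β / ‖lam‖ with hq
  have hq0 : 0 < q := by
    have : (0:ℝ) < ‖lam‖ := by simpa using hlam
    positivity
  set E : ℝ := 1 + q ^ 2 * L ^ 2 with hE
  have hE0 : (0:ℝ) < E := by positivity
  have hM0 : 0 ≤ M := by
    refine le_trans ?_ (hM 0)
    positivity
  -- choose k
  obtain ⟨k, hk⟩ := exists_nat_gt (max (max 1 ((c + K) / (2 * Real.pi * β)))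
      (max ((K + β) / (Real.pi * β)) ((M * E / (Real.pi * β)) ^ 2)))
  have hk1 : (1:ℝ) ≤ (k:ℝ) := le_of_lt (lt_of_le_of_lt (by simp) hk)
  have hk2 : c + K < 2 * Real.pi * β * k := by
    have h := lt_of_le_of_lt (le_max_of_le_left (le_max_right _ _)) hk
    rw [div_lt_iff₀ (by positivity)] at h
    linarith
  have hk3 : K + β < Real.pi * β * k := by
    have h := lt_of_le_of_lt (le_max_of_le_right (le_max_left _ _)) hk
    rw [div_lt_iff₀ (by positivity)] at h
    linarith
  have hk4 : (M * E / (Real.pi * β)) ^ 2 < (k:ℝ) :=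
    lt_of_le_of_lt (le_max_of_le_right (le_max_right _ _)) hk
  set X : ℂ := 2 * (Real.pi : ℂ) * Complex.I * (k : ℂ) * b + lam * C₂ with hX
  have habsX_ub : ‖X‖ ≤ 2 * Real.pi * β * k + K := by
    refine (norm_add_le _ _).trans ?_
    have : ‖2 * (Real.pi : ℂ) * Complex.I * (k : ℂ) * b‖
        = 2 * Real.pi * β * k := by
      simp [norm_mul, Complex.norm_real, _root_.abs_of_nonneg hπ.le, hβ]
      ring
    rw [this, hK]
  have habsX_lb : 2 * Real.pi * β * k - K ≤ ‖X‖ := by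
    have h1 : ‖2 * (Real.pi : ℂ) * Complex.I * (k : ℂ) * b‖
        = 2 * Real.pi * β * k := by
      simp [norm_mul, Complex.norm_real, _root_.abs_of_nonneg hπ.le, hβ]
      ring
    have h2 : ‖2 * (Real.pi : ℂ) * Complex.I * (k : ℂ) * b‖
        - ‖lam * C₂‖ ≤ ‖X‖ := by
      have := norm_sub_norm_le (2 * (Real.pi : ℂ) * Complex.I * (k : ℂ) * b) (-(lam * C₂))
      simpa [hX, sub_neg_eq_add] using this
    rw [h1, ← hK] at h2
    linarith
  set w : ℂ := -X / C₁ with hw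
  have habsw : ‖w‖ = ‖X‖ / c := by
    simp [hw, norm_div, hc]
  have habsw_ge1 : 1 ≤ ‖w‖ := by
    rw [habsw, le_div_iff₀ hc0]
    nlinarith
  have hw0 : w ≠ 0 := by
    intro h
    rw [h] at habsw_ge1; simp at habsw_ge1; linarith
  set z : ℂ := (Complex.log w + 2 * (Real.pi : ℂ) * Complex.I * (k : ℂ)) / lam with hz
  have hexp : Complex.exp (lam * z) = w := by
    have hlz : lam * z = Complex.log w + 2 * (Real.pi : ℂ) * Complex.I * (k : ℂ) := by
      rw [hz]; field_simp
    rw [hlz, Complex.exp_add, Complex.exp_log hw0]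
    have : Complex.exp (2 * (Real.pi : ℂ) * Complex.I * (k : ℂ)) = 1 := by
      have := Complex.exp_int_mul_two_pi_mul_I (k : ℤ)
      push_cast at this
      rw [← this]; ring_nf
    rw [this, mul_one]
  have hgval : C₁ / lam * Complex.exp (lam * z) + b * z + C₂ = b / lam * Complex.log w := by
    rw [hexp, hz, hw, hX]
    field_simp
    ring
  have hderiv : deriv (fun ζ : ℂ => C₁ / lam * Complex.exp (lam * ζ) + b * ζ + C₂) z
      = -X + b := by
    rw [aux_deriv, hexp, hw]
    field_simp
  -- numerator lower bound
  have hNlb : Real.pi * β * k ≤ ‖-X + b‖ := by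
    have h2 : ‖X‖ - β ≤ ‖-X + b‖ := by
      have h := norm_sub_norm_le X b
      rw [show X - b = -(-X + b) by ring, norm_neg] at h
      simpa [hβ] using h
    linarith
  -- abs w upper bound
  have habsw_ub : ‖w‖ ≤ A * k := by
    rw [habsw, hA, div_le_iff₀ hc0]
    have : A * k * c = (2 * Real.pi * β + K) * k := by rw [hA]; field_simp
    nlinarith
  -- log bound
  have hsqk1 : 1 ≤ Real.sqrt (Real.sqrt k) := by
    rw [show (1:ℝ) = Real.sqrt (Real.sqrt 1) by simp]
    exact Real.sqrt_le_sqrt (Real.sqrt_le_sqrt hk1)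
  have hlogw : ‖Complex.log w‖ ≤ L * Real.sqrt (Real.sqrt k) := by
    refine (aux_log_abs w).trans ?_
    have h1 : |Real.log (‖w‖)| = Real.log (‖w‖) :=
      abs_of_nonneg (Real.log_nonneg habsw_ge1)
    have h2 : Real.log (‖w‖) ≤ 4 * Real.sqrt (Real.sqrt (‖w‖)) :=
      aux_log_le _ habsw_ge1
    have h3 : Real.sqrt (Real.sqrt (‖w‖))
        ≤ Real.sqrt (Real.sqrt A) * Real.sqrt (Real.sqrt k) := by
      rw [← Real.sqrt_mul (Real.sqrt_nonneg A), ← Real.sqrt_mul hA0.le]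
      exact Real.sqrt_le_sqrt (Real.sqrt_le_sqrt habsw_ub)
    rw [h1, hL]
    nlinarith [Real.sqrt_nonneg (Real.sqrt A)]
  -- denominator bound
  have hgabs : ‖C₁ / lam * Complex.exp (lam * z) + b * z + C₂‖
      = q * ‖Complex.log w‖ := by
    rw [hgval, norm_mul, norm_div, hq, hβ]
  have hden : 1 + ‖C₁ / lam * Complex.exp (lam * z) + b * z + C₂‖ ^ 2
      ≤ E * Real.sqrt k := by
    rw [hgabs, hE]
    have hsq : (Real.sqrt (Real.sqrt k)) ^ 2 = Real.sqrt k := Real.sq_sqrt (Real.sqrt_nonneg k)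
    have h1 : (q * ‖Complex.log w‖) ^ 2 ≤ q ^ 2 * L ^ 2 * Real.sqrt k := by
      have h0 : 0 ≤ q * ‖Complex.log w‖ := by positivity
      have h2 : (q * ‖Complex.log w‖) ^ 2
          ≤ (q * (L * Real.sqrt (Real.sqrt k))) ^ 2 :=
        pow_le_pow_left₀ h0 (mul_le_mul_of_nonneg_left hlogw hq0.le) 2
      have h3 : (q * (L * Real.sqrt (Real.sqrt k))) ^ 2 = q ^ 2 * L ^ 2 * Real.sqrt k := by
        rw [mul_pow, mul_pow, hsq]; ring
      linarith
    have hsk1 : 1 ≤ Real.sqrt k := by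
      rw [show (1:ℝ) = Real.sqrt 1 by simp]; exact Real.sqrt_le_sqrt hk1
    nlinarith [sq_nonneg q, sq_nonneg L]
  -- conclude
  have hDpos : (0:ℝ) < 1 + ‖C₁ / lam * Complex.exp (lam * z) + b * z + C₂‖ ^ 2 := by
    positivity
  have hfin := hM z
  rw [div_le_iff₀ hDpos, hderiv] at hfin
  have hND : Real.pi * β * k ≤ M * (E * Real.sqrt k) := by
    refine hNlb.trans (hfin.trans ?_)
    exact mul_le_mul_of_nonneg_left hden hM0
  have hskpos : 0 < Real.sqrt k := by positivity
  have hkk : Real.sqrt k * Real.sqrt k = (k:ℝ) := Real.mul_self_sqrt (by positivity)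
  have h1 : Real.pi * β * Real.sqrt k ≤ M * E := by
    have h := hND
    conv at h => lhs; rw [← hkk]
    exact le_of_mul_le_mul_right (by linarith) hskpos
  have h2 : M * E / (Real.pi * β) < Real.sqrt k := by
    rw [← Real.sqrt_sq (by positivity : (0:ℝ) ≤ M * E / (Real.pi * β))]
    exact Real.sqrt_lt_sqrt (by positivity) hk4
  rw [div_lt_iff₀ (by positivity : (0:ℝ) < Real.pi * β)] at h2
  nlinarith
end

section
/- Let f : ℂ → ℂ be an entire function, b ≠ 0 a complex number, and suppose that for all z: f(z) = b if and only if f'(z) = b (f and f' share the value b), and that there exist a ≠ b and K ≥ 0 with |f'(z)| ≤ K whenever f(z) = a. If additionally f has bounded spherical derivative, then no contradiction arises; conversely, if f(ζ) = (C₁/λ)e^{λζ} + bζ + C₂ with C₁, λ nonzero, then f does not have bounded spherical derivative. -/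
-- quadratic lower bound for exp
lemma exp_quad_lb (x : ℝ) (hx : 0 ≤ x) : x^2/4 ≤ Real.exp x := by
  have h := Real.add_one_le_exp (x/2)
  have h2 : Real.exp x = Real.exp (x/2) * Real.exp (x/2) := by
    rw [← Real.exp_add]; ring_nf
  nlinarith [Real.exp_pos (x/2)]

set_option maxHeartbeats 2000000 in
theorem exp_family_not_normal (C₁ C₂ b lam : ℂ) (hC₁ : C₁ ≠ 0) (hlam : lam ≠ 0) (hb : b ≠ 0) :
    ¬ ∃ M : ℝ, ∀ z : ℂ,
      ‖deriv (fun ζ : ℂ => C₁ / lam * Complex.exp (lam * ζ) + b * ζ + C₂) z‖ /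
        (1 + ‖C₁ / lam * Complex.exp (lam * z) + b * z + C₂‖ ^ 2) ≤ M := by
  rintro ⟨M, hM⟩
  have hab : (0:ℝ) < ‖b‖ := norm_pos_iff.mpr hb
  have hal : (0:ℝ) < ‖lam‖ := norm_pos_iff.mpr hlam
  set ab := ‖b‖ with hab_def
  set al := ‖lam‖ with hal_def
  have hA : (0:ℝ) < ‖C₁ / lam‖ := norm_pos_iff.mpr (div_ne_zero hC₁ hlam)
  set A := ‖C₁ / lam‖ with hA_def
  set aC₂ := ‖C₂‖ with haC₂_def
  have haC₂ : (0:ℝ) ≤ aC₂ := norm_nonneg _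
  set P : ℝ := Real.pi * ab / al with hP_def
  have hP : (0:ℝ) ≤ P := by positivity
  set D : ℝ := 1 + P^2 with hD_def
  have hD : (1:ℝ) ≤ D := by nlinarith
  have hD0 : (0:ℝ) < D := by linarith
  set R : ℝ := (ab + D * (|M| + 1)) / al with hR_def
  have hR : (0:ℝ) < R := by
    apply div_pos _ hal
    have : (0:ℝ) ≤ |M| := abs_nonneg M
    nlinarith
  set B : ℝ := ab / al with hB_def
  have hB : (0:ℝ) < B := div_pos hab hal
  set t : ℝ := (R + aC₂) / B with ht_def
  have ht : (0:ℝ) < t := div_pos (by linarith) hB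
  have hBt : B * t = R + aC₂ := by
    rw [ht_def]; field_simp
  -- The function g and F for the IVT
  set g : ℝ → ℂ := fun c => b * (((c:ℂ) + (t:ℂ) * Complex.I) / lam) + C₂ with hg_def
  set F : ℝ → ℝ := fun c => A * Real.exp c - ‖g c‖ with hF_def
  have hgabs : ∀ c : ℝ, ‖b * (((c:ℂ) + (t:ℂ) * Complex.I) / lam)‖ = B * ‖(c:ℂ) + (t:ℂ) * Complex.I‖ := by
    intro c
    rw [norm_mul, norm_div]
    rw [hB_def]; ring
  have habs_ct_le : ∀ c : ℝ, ‖(c:ℂ) + (t:ℂ) * Complex.I‖ ≤ |c| + t := by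
    intro c
    calc ‖(c:ℂ) + (t:ℂ) * Complex.I‖ ≤ ‖(c:ℂ)‖ + ‖(t:ℂ) * Complex.I‖ := norm_add_le _ _
    _ = |c| + t := by
        rw [norm_mul, Complex.norm_I, Complex.norm_real, Complex.norm_real, Real.norm_eq_abs, Real.norm_eq_abs, mul_one, abs_of_pos ht]
  have habs_ct_ge_im : ∀ c : ℝ, t ≤ ‖(c:ℂ) + (t:ℂ) * Complex.I‖ := by
    intro c
    have h := Complex.abs_im_le_norm ((c:ℂ) + (t:ℂ) * Complex.I)
    simpa [abs_of_pos ht] using h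
  have habs_ct_ge_re : ∀ c : ℝ, |c| ≤ ‖(c:ℂ) + (t:ℂ) * Complex.I‖ := by
    intro c
    have h := Complex.abs_re_le_norm ((c:ℂ) + (t:ℂ) * Complex.I)
    simpa using h
  have hg_le : ∀ c : ℝ, ‖g c‖ ≤ B * (|c| + t) + aC₂ := by
    intro c
    calc ‖g c‖ ≤ ‖b * (((c:ℂ) + (t:ℂ) * Complex.I) / lam)‖ + aC₂ := norm_add_le _ _
    _ = B * ‖(c:ℂ) + (t:ℂ) * Complex.I‖ + aC₂ := by rw [hgabs]
    _ ≤ B * (|c| + t) + aC₂ := by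
        have := habs_ct_le c
        nlinarith
  have hg_ge : ∀ c : ℝ, B * ‖(c:ℂ) + (t:ℂ) * Complex.I‖ - aC₂ ≤ ‖g c‖ := by
    intro c
    have h1 : ‖b * (((c:ℂ) + (t:ℂ) * Complex.I) / lam)‖ ≤ ‖g c‖ + aC₂ := by
      calc ‖b * (((c:ℂ) + (t:ℂ) * Complex.I) / lam)‖
          = ‖g c + (- C₂)‖ := by rw [hg_def]; ring_nf
      _ ≤ ‖g c‖ + ‖-C₂‖ := norm_add_le _ _
      _ = ‖g c‖ + aC₂ := by rw [norm_neg]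
    rw [← hgabs c] at *
    linarith
  -- find c₂ with 0 ≤ F c₂
  set E : ℝ := B * t + aC₂ with hE_def
  set c₂ : ℝ := max 1 (4 * (B + E + 1) / A) with hc₂_def
  have hc₂1 : (1:ℝ) ≤ c₂ := le_max_left _ _
  have hc₂A : 4 * (B + E + 1) / A ≤ c₂ := le_max_right _ _
  have hFc₂ : 0 ≤ F c₂ := by
    have hc₂0 : (0:ℝ) ≤ c₂ := by linarith
    have hexp := exp_quad_lb c₂ hc₂0
    have hkey : B * c₂ + E ≤ A * Real.exp c₂ := by
      have h1 : 4 * (B + E + 1) ≤ A * c₂ := by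
        rw [div_le_iff₀ hA] at hc₂A; linarith [mul_comm c₂ A]
      have hE0 : 0 ≤ E := by positivity
      nlinarith
    have h2 : ‖g c₂‖ ≤ B * c₂ + E := by
      have := hg_le c₂
      rw [abs_of_nonneg hc₂0] at this
      rw [hE_def]; linarith
    simp only [hF_def]
    linarith
  -- find c₁ with F c₁ ≤ 0
  set c₁ : ℝ := -((A + aC₂ + 1) / B) with hc₁_def
  have hc₁neg : c₁ ≤ 0 := by
    rw [hc₁_def]; simp only [neg_nonpos]; positivity
  have hc₁₂ : c₁ ≤ c₂ := by linarith
  have hFc₁ : F c₁ ≤ 0 := by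
    have h1 : A * Real.exp c₁ ≤ A := by
      have := Real.exp_le_one_iff.mpr hc₁neg
      nlinarith
    have h2 : A + 1 ≤ ‖g c₁‖ := by
      have hge := hg_ge c₁
      have hre := habs_ct_ge_re c₁
      have habsc₁ : |c₁| = (A + aC₂ + 1) / B := by
        rw [hc₁_def, abs_neg, abs_of_nonneg (by positivity)]
      have hBc : B * |c₁| = A + aC₂ + 1 := by
        rw [habsc₁]; field_simp
      have hmul : B * |c₁| ≤ B * ‖(c₁:ℂ) + (t:ℂ) * Complex.I‖ :=
        mul_le_mul_of_nonneg_left hre (le_of_lt hB)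
      linarith
    simp only [hF_def]
    linarith
  -- IVT
  have hFcont : ContinuousOn F (Set.Icc c₁ c₂) := by
    apply Continuous.continuousOn
    apply Continuous.sub
    · exact continuous_const.mul Real.continuous_exp
    · apply continuous_norm.comp
      fun_prop
  have h0mem : (0:ℝ) ∈ Set.Icc (F c₁) (F c₂) := ⟨hFc₁, hFc₂⟩
  obtain ⟨c, hcmem, hFc⟩ := intermediate_value_Icc hc₁₂ hFcont h0mem
  -- setup the point
  set z₀ : ℂ := ((c:ℂ) + (t:ℂ) * Complex.I) / lam with hz₀_def
  have hlz₀ : lam * z₀ = (c:ℂ) + (t:ℂ) * Complex.I := by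
    rw [hz₀_def]; field_simp
  set w : ℂ := C₁ / lam * Complex.exp (lam * z₀) with hw_def
  have habsw : ‖w‖ = A * Real.exp c := by
    rw [hw_def, norm_mul, hlz₀, Complex.norm_exp]
    simp [hA_def, norm_div]
  set v : ℂ := g c with hv_def
  have hvz : v = b * z₀ + C₂ := by
    rw [hv_def, hg_def, hz₀_def]
  have hvw : ‖v‖ = ‖w‖ := by
    have : A * Real.exp c - ‖g c‖ = 0 := hFc
    rw [habsw, hv_def]; linarith
  have hvR : R ≤ ‖v‖ := by
    have hge := hg_ge c
    have him := habs_ct_ge_im c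
    have hmul : B * t ≤ B * ‖(c:ℂ) + (t:ℂ) * Complex.I‖ :=
      mul_le_mul_of_nonneg_left him (le_of_lt hB)
    rw [hv_def]; linarith
  have hv0 : v ≠ 0 := by
    intro h
    rw [h] at hvR; simp at hvR; linarith
  have hw0 : w ≠ 0 := by
    rw [hw_def]
    exact mul_ne_zero (div_ne_zero hC₁ hlam) (Complex.exp_ne_zero _)
  set u : ℂ := -v / w with hu_def
  have habsu : ‖u‖ = 1 := by
    rw [hu_def, norm_div, norm_neg, hvw, div_self]
    exact norm_ne_zero_iff.mpr hw0
  have hu0 : u ≠ 0 := by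
    intro h; rw [h] at habsu; simp at habsu
  have hwu : w * u = -v := by
    rw [hu_def, mul_div_cancel₀ _ hw0]
  -- the shift
  set δ : ℂ := Complex.log u / lam with hδ_def
  have hlogu : Complex.log u = (Complex.arg u : ℂ) * Complex.I := by
    rw [Complex.log, habsu, Real.log_one, Complex.ofReal_zero, zero_add]
  have habsbδ : ‖b * δ‖ ≤ P := by
    rw [hδ_def, norm_mul, norm_div, hlogu, norm_mul, Complex.norm_I, Complex.norm_real, Real.norm_eq_abs, mul_one]
    rw [hP_def]
    have harg := Complex.abs_arg_le_pi u
    have h1 : ab * |Complex.arg u| ≤ Real.pi * ab := by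
      nlinarith [abs_nonneg (Complex.arg u)]
    calc ab * (|Complex.arg u| / al) = ab * |Complex.arg u| / al := by ring
    _ ≤ Real.pi * ab / al := (div_le_div_iff_of_pos_right hal).mpr h1
  set z₁ : ℂ := z₀ + δ with hz₁_def
  have hexpz₁ : Complex.exp (lam * z₁) = Complex.exp (lam * z₀) * u := by
    rw [hz₁_def, mul_add, Complex.exp_add]
    congr 1
    have : lam * δ = Complex.log u := by rw [hδ_def]; field_simp
    rw [this, Complex.exp_log hu0]
  -- the value of f at z₁
  have hfval : C₁ / lam * Complex.exp (lam * z₁) + b * z₁ + C₂ = b * δ := by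
    rw [hexpz₁]
    have h1 : C₁ / lam * (Complex.exp (lam * z₀) * u) = w * u := by rw [hw_def]; ring
    rw [h1, hwu, hz₁_def, hvz]; ring
  -- the derivative
  have hd : HasDerivAt (fun ζ : ℂ => C₁ / lam * Complex.exp (lam * ζ) + b * ζ + C₂)
      (C₁ * Complex.exp (lam * z₁) + b) z₁ := by
    have h1 : HasDerivAt (fun ζ : ℂ => lam * ζ) lam z₁ := by
      simpa using (hasDerivAt_id z₁).const_mul lam
    have h2 := h1.cexp
    have h3 := h2.const_mul (C₁ / lam)
    have h4 : HasDerivAt (fun ζ : ℂ => b * ζ) b z₁ := by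
      simpa using (hasDerivAt_id z₁).const_mul b
    have h5 := (h3.add h4).add_const C₂
    convert h5 using 1
    case e'_9 =>
      field_simp
    all_goals rfl
  have hdval : C₁ * Complex.exp (lam * z₁) + b = -lam * v + b := by
    have h1 : C₁ * Complex.exp (lam * z₁) = lam * (C₁ / lam * Complex.exp (lam * z₁)) := by
      field_simp
    rw [h1, hexpz₁]
    have h2 : C₁ / lam * (Complex.exp (lam * z₀) * u) = w * u := by rw [hw_def]; ring
    rw [h2, hwu]; ring
  -- numeric estimates
  have hnum : D * (|M| + 1) ≤ ‖C₁ * Complex.exp (lam * z₁) + b‖ := by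
    rw [hdval]
    have h1 : ‖-lam * v‖ ≤ ‖-lam * v + b‖ + ab := by
      calc ‖-lam * v‖ = ‖(-lam * v + b) + (-b)‖ := by ring_nf
      _ ≤ ‖-lam * v + b‖ + ‖-b‖ := norm_add_le _ _
      _ = ‖-lam * v + b‖ + ab := by rw [norm_neg]
    have h2 : ‖-lam * v‖ = al * ‖v‖ := by
      rw [norm_mul, norm_neg]
    have h3 : al * R ≤ al * ‖v‖ := by nlinarith
    have h4 : al * R = ab + D * (|M| + 1) := by
      rw [hR_def]; field_simp
    linarith
  have hdenom : 1 + ‖b * δ‖ ^ 2 ≤ D := by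
    rw [hD_def]
    have h0 : (0:ℝ) ≤ ‖b * δ‖ := norm_nonneg _
    nlinarith
  have hdenompos : (0:ℝ) < 1 + ‖b * δ‖ ^ 2 := by positivity
  -- contradiction
  have hMz := hM z₁
  rw [hd.deriv, hfval] at hMz
  have hfinal : |M| + 1 ≤ ‖C₁ * Complex.exp (lam * z₁) + b‖ / (1 + ‖b * δ‖ ^ 2) := by
    rw [le_div_iff₀ hdenompos]
    have hM1 : (0:ℝ) ≤ |M| + 1 := by positivity
    calc (|M| + 1) * (1 + ‖b * δ‖ ^ 2) ≤ (|M| + 1) * D := by nlinarith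
    _ = D * (|M| + 1) := by ring
    _ ≤ _ := hnum
  have := le_abs_self M
  linarith
end
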